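/- arXiv:1907.00264 — 2 statements merged into one kernel-verified Lean document; each statement's English description precedes it below -/
import Mathlib

section
/- Let n ≥ 2 be an integer and 0 < δ < 1. Then ∫₀¹∫₀¹ s · t^{2n-3} / (δ + s + t²)^{n+1} dt ds ≤ C(n) · (1 + |log δ|) for some constant C(n) depending only on n. -/
open MeasureTheory

/-! Since `t² ≤ D := δ + s + t²`, the integrand is at most `s t / D³`, whose `t`-antiderivative is
`-s / (4 D²)`; hence the inner integral is at most `s / (δ + s)² ≤ 1 / (δ + s)`, and integrating
this over `s ∈ [0, 1]` gives `log ((1 + δ) / δ) ≤ 1 + |log δ|`. -/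

open intervalIntegral Set

lemma pow_two_mul_sub_three_div_pow_le {n : ℕ} (hn : 2 ≤ n) {t D : ℝ} (ht : 0 ≤ t)
    (htD : t ^ 2 ≤ D) : t ^ (2 * n - 3) / D ^ (n + 1) ≤ t / D ^ 3 := by
  obtain ⟨k, rfl⟩ := Nat.exists_eq_add_of_le hn
  have hexp : 2 * (2 + k) - 3 = 2 * k + 1 := by omega
  have hD : 0 ≤ D := (sq_nonneg t).trans htD
  rw [hexp, pow_succ, pow_mul, show 2 + k + 1 = 3 + k by ring, pow_add, mul_comm,
    mul_div_mul_comm]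
  exact mul_le_of_le_one_right (div_nonneg ht (by positivity))
    (div_le_one_of_le₀ (pow_le_pow_left₀ (sq_nonneg t) htD k) (by positivity))

lemma integral_div_add_sq_pow_three {a : ℝ} (ha : 0 < a) :
    ∫ t in (0:ℝ)..1, t / (a + t ^ 2) ^ 3 = ((a ^ 2)⁻¹ - ((a + 1) ^ 2)⁻¹) / 4 := by
  have hderiv : ∀ t ∈ uIcc (0:ℝ) 1,
      HasDerivAt (fun t ↦ -((a + t ^ 2) ^ 2)⁻¹ / 4) (t / (a + t ^ 2) ^ 3) t := by
    intro t _
    have hpos : 0 < a + t ^ 2 := by positivity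
    have hbase : HasDerivAt (fun t ↦ a + t ^ 2) (2 * t) t := by
      simpa using (hasDerivAt_pow 2 t).const_add a
    refine (((hbase.fun_pow 2).inv (pow_ne_zero 2 hpos.ne')).neg.div_const 4).congr_deriv ?_
    field_simp
    ring
  rw [integral_eq_sub_of_hasDerivAt hderiv]
  · ring_nf
  · exact (Continuous.div (by fun_prop) (by fun_prop) fun t ↦ by positivity).intervalIntegrable _ _

/-- No integrability of `f` is required: this spares proving that the inner integral is
measurable in `s`. -/
lemma intervalIntegral.integral_mono_on_of_nonneg {f g : ℝ → ℝ} {a b : ℝ} (hab : a ≤ b)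
    (hf : ∀ x ∈ Icc a b, 0 ≤ f x) (hg : IntervalIntegrable g volume a b)
    (h : ∀ x ∈ Icc a b, f x ≤ g x) : ∫ x in a..b, f x ≤ ∫ x in a..b, g x := by
  have hIoc {p : ℝ → Prop} (hp : ∀ x ∈ Icc a b, p x) : ∀ᵐ x ∂volume.restrict (Ioc a b), p x :=
    ae_restrict_of_forall_mem measurableSet_Ioc fun x hx ↦ hp x (Ioc_subset_Icc_self hx)
  rw [integral_of_le hab, integral_of_le hab]
  exact integral_mono_of_nonneg (hIoc hf) hg.1 (hIoc h)

lemma integral_mul_pow_div_pow_le_inv {n : ℕ} (hn : 2 ≤ n) {a s : ℝ} (ha : 0 < a) (hs : 0 ≤ s)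
    (hsa : s ≤ a) : ∫ t in (0:ℝ)..1, s * t ^ (2 * n - 3) / (a + t ^ 2) ^ (n + 1) ≤ a⁻¹ := by
  have hcont {k m : ℕ} : Continuous fun t : ℝ ↦ s * t ^ k / (a + t ^ 2) ^ m :=
    Continuous.div (by fun_prop) (by fun_prop) fun t ↦ by positivity
  calc ∫ t in (0:ℝ)..1, s * t ^ (2 * n - 3) / (a + t ^ 2) ^ (n + 1)
      ≤ ∫ t in (0:ℝ)..1, s * t ^ 1 / (a + t ^ 2) ^ 3 :=
        integral_mono_on zero_le_one (hcont.intervalIntegrable _ _) (hcont.intervalIntegrable _ _)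
          fun t ht ↦ by
            simp only [mul_div_assoc, pow_one]
            exact mul_le_mul_of_nonneg_left
              (pow_two_mul_sub_three_div_pow_le hn ht.1 (by linarith)) hs
    _ = s * (((a ^ 2)⁻¹ - ((a + 1) ^ 2)⁻¹) / 4) := by
        simp only [mul_div_assoc, pow_one, intervalIntegral.integral_const_mul,
          integral_div_add_sq_pow_three ha]
    _ ≤ s * (a ^ 2)⁻¹ := by
        gcongr
        linarith [show 0 ≤ ((a + 1) ^ 2)⁻¹ by positivity, show 0 ≤ (a ^ 2)⁻¹ by positivity]
    _ ≤ a * (a ^ 2)⁻¹ := by gcongr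
    _ = a⁻¹ := by field_simp

/-- Let `n ≥ 2` and `0 < δ < 1`. Then
`∫₀¹∫₀¹ s · t^(2n-3) / (δ + s + t²)^(n+1) dt ds ≤ C(n) · (1 + |log δ|)`. -/
theorem stmt4 (n : ℕ) (hn : 2 ≤ n) :
    ∃ C : ℝ, 0 < C ∧ ∀ δ : ℝ, 0 < δ → δ < 1 →
      (∫ s in (0:ℝ)..1, ∫ t in (0:ℝ)..1, s * t ^ (2*n - 3) / (δ + s + t^2)^(n+1))
        ≤ C * (1 + |Real.log δ|) := by
  refine ⟨1, one_pos, fun δ hδ hδ1 ↦ ?_⟩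
  have hinner : ∀ s ∈ Icc (0:ℝ) 1,
      ∫ t in (0:ℝ)..1, s * t ^ (2*n - 3) / (δ + s + t^2)^(n+1) ≤ (δ + s)⁻¹ := fun s hs ↦
    integral_mul_pow_div_pow_le_inv hn (by linarith [hs.1]) hs.1 (by linarith)
  have hinner_nonneg : ∀ s ∈ Icc (0:ℝ) 1,
      0 ≤ ∫ t in (0:ℝ)..1, s * t ^ (2*n - 3) / (δ + s + t^2)^(n+1) := fun s hs ↦
    integral_nonneg zero_le_one fun t ht ↦ by have := hs.1; have := ht.1; positivity
  have hinv : IntervalIntegrable (fun s : ℝ ↦ (δ + s)⁻¹) volume 0 1 :=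
    ContinuousOn.intervalIntegrable <| (continuous_const_add δ).continuousOn.inv₀ fun s hs ↦ by
      rw [uIcc_of_le zero_le_one] at hs; linarith [hs.1]
  calc (∫ s in (0:ℝ)..1, ∫ t in (0:ℝ)..1, s * t ^ (2*n - 3) / (δ + s + t^2)^(n+1))
      ≤ ∫ s in (0:ℝ)..1, (δ + s)⁻¹ :=
        integral_mono_on_of_nonneg zero_le_one hinner_nonneg hinv hinner
    _ = Real.log (δ + 1) - Real.log δ := by
        rw [integral_comp_add_left (·⁻¹), add_zero, integral_inv_of_pos hδ (by linarith),
          Real.log_div (by linarith) hδ.ne']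
    _ ≤ 1 * (1 + |Real.log δ|) := by
        linarith [Real.log_le_sub_one_of_pos (show 0 < δ + 1 by linarith),
          neg_le_abs (Real.log δ)]
end

section
/- Let n ≥ 2 be an integer, 0 < α < 1, and 0 < δ < 1. Then ∫₀¹∫₀¹∫₀¹ s₁^{α-1} t^{2n-3} / (δ + s₁ + s₂ + t²)^{n+1} ds₁ ds₂ dt ≤ C(n, α) · δ^{α - 1} for some constant C(n, α). -/
/-!
With `D = δ + s₁ + s₂ + t²` and `ε = (1 - α) / 3`, each of `δ + s₁`, `δ + s₂`, `δ + t²` is at most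
`D`, so `D ^ (n + 1) ≥ (δ + s₁) ^ (α + ε) * (δ + s₂) ^ (1 + ε) * (δ + t²) ^ (n - 1 + ε)` and the
triple integral is bounded by a product of three one-variable integrals. After `u = t²` in the
last one, each has the form `∫₀¹ s ^ (β - 1) * (δ + s) ^ (-γ)` with `β < γ`, which is
`O(δ ^ (β - γ))` by splitting at `s = δ`. Here every `β - γ` equals `-ε`, and `-3ε = α - 1`.
-/

open MeasureTheory Set

lemma intervalIntegral.integral_mono_of_nonneg_on {f g : ℝ → ℝ} {a b : ℝ} (hab : a ≤ b)
    (hf : ∀ x ∈ Icc a b, 0 ≤ f x) (hg : IntervalIntegrable g volume a b)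
    (hfg : ∀ x ∈ Icc a b, f x ≤ g x) :
    ∫ x in a..b, f x ≤ ∫ x in a..b, g x := by
  rw [intervalIntegral.integral_of_le hab, intervalIntegral.integral_of_le hab]
  refine integral_mono_of_nonneg ?_ hg.1 ?_
  · exact (ae_restrict_iff' measurableSet_Ioc).2 <| .of_forall fun x hx =>
      hf x (Ioc_subset_Icc_self hx)
  · exact (ae_restrict_iff' measurableSet_Ioc).2 <| .of_forall fun x hx =>
      hfg x (Ioc_subset_Icc_self hx)

lemma integral_integral_integral_le_mul_mul {F : ℝ → ℝ → ℝ → ℝ} {f g h : ℝ → ℝ} {a b : ℝ}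
    (hab : a ≤ b) (hF : ∀ t ∈ Icc a b, ∀ y ∈ Icc a b, ∀ x ∈ Icc a b, 0 ≤ F t y x)
    (hFfgh : ∀ t ∈ Icc a b, ∀ y ∈ Icc a b, ∀ x ∈ Icc a b, F t y x ≤ f x * g y * h t)
    (hf : IntervalIntegrable f volume a b) (hg : IntervalIntegrable g volume a b)
    (hh : IntervalIntegrable h volume a b) :
    ∫ t in a..b, ∫ y in a..b, ∫ x in a..b, F t y x
      ≤ (∫ x in a..b, f x) * (∫ y in a..b, g y) * ∫ t in a..b, h t := by
  have inner (t) (ht : t ∈ Icc a b) (y) (hy : y ∈ Icc a b) :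
      ∫ x in a..b, F t y x ≤ (∫ x in a..b, f x) * g y * h t := by
    simpa only [intervalIntegral.integral_mul_const] using
      intervalIntegral.integral_mono_of_nonneg_on hab (hF t ht y hy)
        ((hf.mul_const _).mul_const _) (hFfgh t ht y hy)
  have middle (t) (ht : t ∈ Icc a b) :
      ∫ y in a..b, ∫ x in a..b, F t y x ≤ (∫ x in a..b, f x) * (∫ y in a..b, g y) * h t := by
    simpa only [intervalIntegral.integral_mul_const, intervalIntegral.integral_const_mul] using
      intervalIntegral.integral_mono_of_nonneg_on hab
        (fun y hy => intervalIntegral.integral_nonneg hab (hF t ht y hy))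
        ((hg.const_mul _).mul_const _) (inner t ht)
  simpa only [intervalIntegral.integral_const_mul] using
    intervalIntegral.integral_mono_of_nonneg_on hab
      (fun t ht => intervalIntegral.integral_nonneg hab fun y hy =>
        intervalIntegral.integral_nonneg hab (hF t ht y hy))
      (hh.const_mul _) middle

lemma rpow_mul_rpow_mul_rpow_le_rpow_add {x y z X a b c : ℝ} (hx : 0 ≤ x) (hy : 0 ≤ y)
    (hz : 0 ≤ z) (hxX : x ≤ X) (hyX : y ≤ X) (hzX : z ≤ X) (ha : 0 ≤ a) (hb : 0 ≤ b)
    (hc : 0 ≤ c) :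
    x ^ a * y ^ b * z ^ c ≤ X ^ (a + b + c) := by
  have hX : 0 ≤ X := hx.trans hxX
  rw [Real.rpow_add_of_nonneg hX (by positivity) hc, Real.rpow_add_of_nonneg hX ha hb]
  gcongr

lemma intervalIntegrable_rpow_mul_add_rpow {β γ δ u v : ℝ} (hβ : 0 < β) (hδ : 0 < δ)
    (hu : 0 ≤ u) (hv : 0 ≤ v) :
    IntervalIntegrable (fun s => s ^ (β - 1) * (δ + s) ^ (-γ)) volume u v := by
  refine (intervalIntegral.intervalIntegrable_rpow' (by linarith)).mul_continuousOn ?_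
  refine (continuousOn_const.add continuousOn_id).rpow_const fun s hs => Or.inl ?_
  have : 0 ≤ s := by rcases mem_uIcc.1 hs with h | h <;> linarith [h.1]
  exact (add_pos_of_pos_of_nonneg hδ this).ne'

lemma integral_rpow_mul_add_rpow_neg_le {β γ δ : ℝ} (hβ : 0 < β) (hβγ : β < γ) (hδ0 : 0 < δ)
    (hδ1 : δ ≤ 1) :
    ∫ s in (0:ℝ)..1, s ^ (β - 1) * (δ + s) ^ (-γ) ≤ (1 / β + 1 / (γ - β)) * δ ^ (β - γ) := by
  rw [← intervalIntegral.integral_add_adjacent_intervals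
    (intervalIntegrable_rpow_mul_add_rpow hβ hδ0 le_rfl hδ0.le)
    (intervalIntegrable_rpow_mul_add_rpow hβ hδ0 hδ0.le zero_le_one)]
  have near : ∫ s in (0:ℝ)..δ, s ^ (β - 1) * (δ + s) ^ (-γ) ≤ δ ^ (β - γ) / β := calc
    _ ≤ ∫ s in (0:ℝ)..δ, s ^ (β - 1) * δ ^ (-γ) := by
      refine intervalIntegral.integral_mono_on hδ0.le
        (intervalIntegrable_rpow_mul_add_rpow hβ hδ0 le_rfl hδ0.le)
        ((intervalIntegral.intervalIntegrable_rpow' (by linarith)).mul_const _) fun s hs => ?_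
      exact mul_le_mul_of_nonneg_left
        (Real.rpow_le_rpow_of_nonpos hδ0 (by linarith [hs.1]) (by linarith))
        (Real.rpow_nonneg hs.1 _)
    _ = δ ^ (β - γ) / β := by
      rw [intervalIntegral.integral_mul_const, integral_rpow (Or.inl (by linarith)),
        sub_add_cancel, Real.zero_rpow hβ.ne', sub_zero, div_mul_eq_mul_div,
        ← Real.rpow_add hδ0, ← sub_eq_add_neg]
  have h0 : (0:ℝ) ∉ uIcc δ 1 := by rw [uIcc_of_le hδ1]; exact fun h => by linarith [h.1]
  have far : ∫ s in δ..1, s ^ (β - 1) * (δ + s) ^ (-γ) ≤ δ ^ (β - γ) / (γ - β) := calc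
    _ ≤ ∫ s in δ..1, s ^ (β - 1 - γ) := by
      refine intervalIntegral.integral_mono_on hδ1
        (intervalIntegrable_rpow_mul_add_rpow hβ hδ0 hδ0.le zero_le_one)
        (intervalIntegral.intervalIntegrable_rpow (Or.inr h0)) fun s hs => ?_
      have hs0 : 0 < s := hδ0.trans_le hs.1
      rw [sub_eq_add_neg _ γ, Real.rpow_add hs0]
      exact mul_le_mul_of_nonneg_left
        (Real.rpow_le_rpow_of_nonpos hs0 (by linarith) (by linarith))
        (Real.rpow_nonneg hs0.le _)
    _ = (δ ^ (β - γ) - 1) / (γ - β) := by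
      rw [integral_rpow (Or.inr ⟨by linarith, h0⟩),
        Real.one_rpow, show β - 1 - γ + 1 = β - γ by ring,
        div_eq_div_iff (by linarith) (by linarith)]
      ring
    _ ≤ δ ^ (β - γ) / (γ - β) := by gcongr; linarith
  calc _ ≤ δ ^ (β - γ) / β + δ ^ (β - γ) / (γ - β) := add_le_add near far
    _ = (1 / β + 1 / (γ - β)) * δ ^ (β - γ) := by ring

lemma integral_pow_mul_add_sq_rpow_neg_eq (m : ℕ) {γ δ : ℝ} (hδ : 0 < δ) :
    ∫ t in (0:ℝ)..1, t ^ (2 * m + 1) * (δ + t ^ 2) ^ (-γ)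
      = 1 / 2 * ∫ u in (0:ℝ)..1, u ^ ((m + 1 : ℝ) - 1) * (δ + u) ^ (-γ) := by
  set g : ℝ → ℝ := fun u => u ^ m * (δ + u) ^ (-γ)
  have hg : ContinuousOn g (Ici 0) := (continuous_pow m).continuousOn.mul <|
    (continuousOn_const.add continuousOn_id).rpow_const fun u hu =>
      Or.inl (add_pos_of_pos_of_nonneg hδ hu).ne'
  have hsubst : ∫ t in (0:ℝ)..1, (g ∘ fun t => t ^ 2) t * (2 * t) = ∫ u in (0:ℝ)..1, g u := by
    simpa using intervalIntegral.integral_comp_mul_deriv' (a := 0) (b := 1)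
      (fun t _ => by simpa using hasDerivAt_pow 2 t)
      (continuous_const.mul continuous_id).continuousOn
      (hg.mono (image_subset_iff.2 fun t _ => sq_nonneg t))
  calc _ = ∫ t in (0:ℝ)..1, 1 / 2 * ((g ∘ fun t => t ^ 2) t * (2 * t)) := by
        refine intervalIntegral.integral_congr fun t _ => ?_
        simp only [g, Function.comp_apply]
        ring
    _ = _ := by
      rw [intervalIntegral.integral_const_mul, hsubst]
      congr 1
      refine intervalIntegral.integral_congr fun u _ => ?_
      simp only [g, add_sub_cancel_right, Real.rpow_natCast]

lemma integral_add_rpow_neg_le {γ δ : ℝ} (hγ : 1 < γ) (hδ0 : 0 < δ) (hδ1 : δ ≤ 1) :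
    ∫ s in (0:ℝ)..1, (δ + s) ^ (-γ) ≤ (1 + 1 / (γ - 1)) * δ ^ (1 - γ) := by
  simpa using integral_rpow_mul_add_rpow_neg_le one_pos hγ hδ0 hδ1

lemma integral_pow_mul_add_sq_rpow_neg_le (m : ℕ) {γ δ : ℝ} (hγ : (m : ℝ) + 1 < γ) (hδ0 : 0 < δ)
    (hδ1 : δ ≤ 1) :
    ∫ t in (0:ℝ)..1, t ^ (2 * m + 1) * (δ + t ^ 2) ^ (-γ)
      ≤ 1 / 2 * ((1 / (m + 1) + 1 / (γ - (m + 1))) * δ ^ ((m + 1) - γ)) := by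
  rw [integral_pow_mul_add_sq_rpow_neg_eq m hδ0]
  gcongr
  exact integral_rpow_mul_add_rpow_neg_le (by positivity) hγ hδ0 hδ1

lemma rpow_mul_pow_div_pow_le {n k : ℕ} {α δ a c e x y t : ℝ} (hδ : 0 < δ) (hx : 0 ≤ x)
    (hy : 0 ≤ y) (ht : 0 ≤ t) (ha : 0 ≤ a) (hc : 0 ≤ c) (he : 0 ≤ e)
    (hace : a + c + e = n + 1) :
    x ^ (α - 1) * t ^ k / (δ + x + y + t ^ 2) ^ (n + 1)
      ≤ x ^ (α - 1) * (δ + x) ^ (-a) * (δ + y) ^ (-c) * (t ^ k * (δ + t ^ 2) ^ (-e)) := by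
  have hsplit : (δ + x) ^ a * (δ + y) ^ c * (δ + t ^ 2) ^ e ≤ (δ + x + y + t ^ 2) ^ (n + 1) := by
    rw [← Real.rpow_natCast _ (n + 1), Nat.cast_succ, ← hace]
    exact rpow_mul_rpow_mul_rpow_le_rpow_add (by positivity) (by positivity) (by positivity)
      (by linarith [sq_nonneg t]) (by linarith [sq_nonneg t]) (by linarith) ha hc he
  calc _ ≤ x ^ (α - 1) * t ^ k / ((δ + x) ^ a * (δ + y) ^ c * (δ + t ^ 2) ^ e) := by
        gcongr
    _ = _ := by
      simp only [Real.rpow_neg (by positivity : 0 ≤ δ + x),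
        Real.rpow_neg (by positivity : 0 ≤ δ + y), Real.rpow_neg (by positivity : 0 ≤ δ + t ^ 2)]
      field_simp

lemma integral_integral_integral_le_mul_mul_of_add_eq {n k : ℕ} {α δ a c e : ℝ} (hα : 0 < α)
    (hδ : 0 < δ) (ha : 0 ≤ a) (hc : 0 ≤ c) (he : 0 ≤ e) (hace : a + c + e = n + 1) :
    ∫ t in (0:ℝ)..1, ∫ s₂ in (0:ℝ)..1, ∫ s₁ in (0:ℝ)..1,
        s₁ ^ (α - 1) * t ^ k / (δ + s₁ + s₂ + t ^ 2) ^ (n + 1)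
      ≤ (∫ s₁ in (0:ℝ)..1, s₁ ^ (α - 1) * (δ + s₁) ^ (-a))
        * (∫ s₂ in (0:ℝ)..1, (δ + s₂) ^ (-c))
        * ∫ t in (0:ℝ)..1, t ^ k * (δ + t ^ 2) ^ (-e) := by
  have hg : IntervalIntegrable (fun s => (δ + s) ^ (-c)) volume 0 1 := by
    simpa using intervalIntegrable_rpow_mul_add_rpow (γ := c) one_pos hδ le_rfl zero_le_one
  have hh : IntervalIntegrable (fun t => t ^ k * (δ + t ^ 2) ^ (-e)) volume 0 1 :=
    ((continuous_pow _).mul ((continuous_const.add (continuous_pow 2)).rpow_const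
      fun t => Or.inl (by positivity : δ + t ^ 2 ≠ 0))).intervalIntegrable _ _
  refine integral_integral_integral_le_mul_mul zero_le_one (fun t ht s₂ hs₂ s₁ hs₁ => ?_)
    (fun t ht s₂ hs₂ s₁ hs₁ => rpow_mul_pow_div_pow_le hδ hs₁.1 hs₂.1 ht.1 ha hc he hace)
    (intervalIntegrable_rpow_mul_add_rpow hα hδ le_rfl zero_le_one) hg hh
  have := hs₁.1
  have := hs₂.1
  have := ht.1
  positivity

/-- Let `n ≥ 2`, `0 < α < 1`, `0 < δ < 1`. Then
`∫₀¹∫₀¹∫₀¹ s₁^(α-1) t^(2n-3) / (δ+s₁+s₂+t²)^(n+1) ds₁ ds₂ dt ≤ C(n,α) · δ^(α-1)`. -/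
theorem stmt6 (n : ℕ) (hn : 2 ≤ n) (α : ℝ) (hα0 : 0 < α) (hα1 : α < 1) :
    ∃ C : ℝ, 0 < C ∧ ∀ δ : ℝ, 0 < δ → δ < 1 →
      (∫ t in (0:ℝ)..1, ∫ s₂ in (0:ℝ)..1, ∫ s₁ in (0:ℝ)..1,
          s₁ ^ (α - 1) * t ^ (2*n - 3) / (δ + s₁ + s₂ + t^2)^(n+1))
        ≤ C * δ ^ (α - 1) := by
  obtain ⟨m, rfl⟩ : ∃ m, n = m + 2 := ⟨n - 2, by omega⟩
  set ε := (1 - α) / 3 with hε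
  have hε0 : 0 < ε := by linarith
  refine ⟨(1 / α + 1 / ε) * (1 + 1 / ε) * (1 / 2 * (1 / (m + 1) + 1 / ε)), by positivity,
    fun δ hδ0 hδ1 => ?_⟩
  have hs₁ := integral_rpow_mul_add_rpow_neg_le hα0 (lt_add_of_pos_right α hε0) hδ0 hδ1.le
  have hs₂ := integral_add_rpow_neg_le (lt_add_of_pos_right 1 hε0) hδ0 hδ1.le
  have ht := integral_pow_mul_add_sq_rpow_neg_le m (lt_add_of_pos_right _ hε0) hδ0 hδ1.le
  simp only [add_sub_cancel_left, sub_add_cancel_left] at hs₁ hs₂ ht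
  rw [show 2 * (m + 2) - 3 = 2 * m + 1 by omega]
  calc _ ≤ _ := integral_integral_integral_le_mul_mul_of_add_eq (a := α + ε) (c := 1 + ε)
        (e := m + 1 + ε) hα0 hδ0 (by positivity) (by positivity) (by positivity)
        (by push_cast; ring)
    _ ≤ (1 / α + 1 / ε) * δ ^ (-ε) * ((1 + 1 / ε) * δ ^ (-ε))
        * (1 / 2 * ((1 / (m + 1) + 1 / ε) * δ ^ (-ε))) := by
        gcongr <;> exact intervalIntegral.integral_nonneg zero_le_one fun x hx => by
          have := hx.1
          positivity
    _ = _ := by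
      rw [show α - 1 = -ε + -ε + -ε by linarith, Real.rpow_add hδ0, Real.rpow_add hδ0]
      ring
end
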